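/- Let 𝕂 be an algebraically closed field of characteristic 0 and let σ = Σ_{i=1}^{r'} ωᵢ·e_{ξᵢ} with ω₁,…,ω_{r'} nonzero polynomials in n variables and ξ₁,…,ξ_{r'} ∈ 𝕂ⁿ pairwise distinct. Then the zero set in 𝕂ⁿ of the ideal I_σ = ker H_σ is exactly {ξ₁,…,ξ_{r'}}, i.e. the points ξ₁,…,ξ_{r'} are precisely the common roots of the polynomials p ∈ 𝕂[x] such that σ(p·q) = 0 for all q ∈ 𝕂[x]. -/

import Mathlib

/-!
A single term `ω·e_ζ` kills `m_ζ ^ (deg ω + 1)`, where `m_ζ` is the maximal ideal of `ζ`: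
`∂^β` lowers the `m_ζ`-adic order by `|β|`, because a derivation maps `I ^ (k + 1)` into `I ^ k`.
When `ω ≠ 0` the form is nonzero: by Taylor's formula at `ζ` it takes the value `ω_β β!` at
`(x - ζ) ^ β`. Hence its Hankel kernel is a proper ideal containing a power of `m_ζ`, so it lies
in `m_ζ`.

For `σ = Σⱼ ωⱼ·e_{ξⱼ}` put `Nⱼ = deg ωⱼ + 1`. The kernel `I_σ` contains `⋂ⱼ m_{ξⱼ} ^ Nⱼ`, so a
point `x` with `I_σ ⊆ m_x` has `m_{ξⱼ} ⊆ m_x` for some `j`, i.e. `x = ξⱼ`. Conversely,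
`I_σ ∩ ⋂_{j ≠ i} m_{ξⱼ} ^ Nⱼ` lies in the Hankel kernel of `ωᵢ·e_{ξᵢ}`, hence in the prime
`m_{ξᵢ}`; since the points are distinct, `I_σ ⊆ m_{ξᵢ}`.
-/

open MvPolynomial

namespace PolyExp

variable {K : Type*} [Field K] {n : ℕ}

/-- The iterated partial derivative operator `∂^β` on polynomials. -/
noncomputable def pderivPow (β : Fin n →₀ ℕ) :
    Module.End K (MvPolynomial (Fin n) K) :=
  (List.ofFn fun i : Fin n =>
    ((MvPolynomial.pderiv i).toLinearMap : Module.End K (MvPolynomial (Fin n) K)) ^ (β i)).prod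

/-- The constant coefficient differential operator `ω(∂) = Σ_β ω_β ∂^β`. -/
noncomputable def diffOp (ω : MvPolynomial (Fin n) K) :
    Module.End K (MvPolynomial (Fin n) K) :=
  ∑ β ∈ ω.support, ω.coeff β • pderivPow β

/-- The evaluation linear form `e_ξ : p ↦ p(ξ)`. -/
noncomputable def evalDual (ξ : Fin n → K) : Module.Dual K (MvPolynomial (Fin n) K) :=
  (MvPolynomial.aeval ξ).toLinearMap

/-- The polynomial-exponential linear form `ω·e_ξ : p ↦ (ω(∂)p)(ξ)`. -/
noncomputable def polyExpDual (ω : MvPolynomial (Fin n) K) (ξ : Fin n → K) :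
    Module.Dual K (MvPolynomial (Fin n) K) :=
  evalDual ξ ∘ₗ diffOp ω

/-- The Hankel operator `H_σ : p ↦ (q ↦ σ(p·q))`. -/
noncomputable def hankel (σ : Module.Dual K (MvPolynomial (Fin n) K)) :
    MvPolynomial (Fin n) K →ₗ[K] Module.Dual K (MvPolynomial (Fin n) K) :=
  (LinearMap.llcomp K (MvPolynomial (Fin n) K) (MvPolynomial (Fin n) K) K σ) ∘ₗ
    (LinearMap.mul K (MvPolynomial (Fin n) K))

/-- `μ(ω)`: the dimension of the span of all partial derivatives of `ω`. -/
noncomputable def mu (ω : MvPolynomial (Fin n) K) : ℕ :=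
  Module.finrank K (Submodule.span K (Set.range fun β : Fin n →₀ ℕ => pderivPow β ω))

/-- The kernel `I_σ` of the Hankel operator, as an ideal. -/
def hankelKer (σ : Module.Dual K (MvPolynomial (Fin n) K)) : Ideal (MvPolynomial (Fin n) K) where
  carrier := {p | ∀ q, σ (p * q) = 0}
  add_mem' := by
    intro a b ha hb q
    rw [add_mul, map_add, ha q, hb q, add_zero]
  zero_mem' := by
    intro q
    rw [zero_mul, map_zero]
  smul_mem' := by
    intro c p hp q
    rw [smul_eq_mul, mul_comm c p, mul_assoc]
    exact hp (c * q)

end PolyExp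

namespace PolyExp

variable {K : Type*} [Field K] {n : ℕ}

theorem pderiv_commute (i j : Fin n) :
    Commute ((pderiv i).toLinearMap : Module.End K (MvPolynomial (Fin n) K))
      (pderiv j).toLinearMap := by
  have hbracket : ⁅pderiv i, pderiv j⁆ = (0 : Derivation K (MvPolynomial (Fin n) K) _) :=
    derivation_ext fun k => by
      rw [Derivation.commutator_apply]
      simp [Pi.single_apply, apply_ite]
  refine LinearMap.ext fun p => sub_eq_zero.1 ?_
  simpa [Derivation.commutator_apply] using congrArg (· p) hbracket

theorem _root_.List.prod_ofFn_mul_of_commute {M : Type*} [Monoid M] :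
    ∀ {m : ℕ} (f g : Fin m → M), (∀ i j, Commute (g i) (f j)) →
      (List.ofFn fun i => f i * g i).prod = (List.ofFn f).prod * (List.ofFn g).prod
  | 0, _, _, _ => by simp
  | m + 1, f, g, h => by
    have hg : Commute (g 0) (List.ofFn fun i => f i.succ).prod :=
      Commute.list_prod_right _ _ fun x hx => by
        obtain ⟨j, rfl⟩ := List.mem_ofFn.1 hx
        exact h 0 j.succ
    simp only [List.ofFn_succ, List.prod_cons]
    rw [List.prod_ofFn_mul_of_commute _ _ fun i j => h _ _, mul_assoc, ← mul_assoc (g 0),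
      hg.eq]
    simp only [mul_assoc]

theorem pderivPow_add (β γ : Fin n →₀ ℕ) :
    pderivPow (K := K) (β + γ) = pderivPow β * pderivPow γ := by
  simp only [pderivPow, Finsupp.coe_add, Pi.add_apply, pow_add]
  exact List.prod_ofFn_mul_of_commute _ _ fun i j => (pderiv_commute i j).pow_pow _ _

theorem pderivPow_zero : pderivPow (K := K) (0 : Fin n →₀ ℕ) = 1 := by
  simp [pderivPow]

theorem pderivPow_single (i : Fin n) (m : ℕ) :
    pderivPow (K := K) (Finsupp.single i m) = (pderiv i).toLinearMap ^ m := by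
  classical
  rw [pderivPow, List.ofFn_eq_map, List.prod_map_eq_pow_single i, List.count_finRange, pow_one,
    Finsupp.single_eq_same]
  intro j hj _
  rw [Finsupp.single_eq_of_ne hj, pow_zero]

theorem _root_.Finsupp.induction_single_one {σ : Type*} {P : (σ →₀ ℕ) → Prop} (zero : P 0)
    (add : ∀ β γ, P β → P γ → P (β + γ)) (single : ∀ i, P (Finsupp.single i 1))
    (β : σ →₀ ℕ) : P β := by
  induction β using Finsupp.induction_linear with
  | zero => exact zero
  | add β γ hβ hγ => exact add β γ hβ hγ
  | single i m =>
    induction m with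
    | zero => simpa using zero
    | succ m ih => simpa [Finsupp.single_add] using add _ _ ih (single i)

theorem _root_.Derivation.map_mem_pow {R A : Type*} [CommSemiring R] [CommRing A] [Algebra R A]
    (D : Derivation R A A) (I : Ideal A) : ∀ (k : ℕ) {a : A}, a ∈ I ^ (k + 1) → D a ∈ I ^ k
  | 0, _, _ => by simp
  | k + 1, a, ha => by
    rw [pow_succ] at ha
    refine Submodule.mul_induction_on ha (fun b hb c hc => ?_) fun x y hx hy => ?_
    · rw [D.leibniz, smul_eq_mul, smul_eq_mul]
      refine add_mem (Ideal.mul_mem_right _ _ hb) ?_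
      rw [pow_succ']
      exact Ideal.mul_mem_mul hc (D.map_mem_pow I k hb)
    · rw [map_add]
      exact add_mem hx hy

theorem pderivPow_mem_pow (I : Ideal (MvPolynomial (Fin n) K)) (β : Fin n →₀ ℕ) :
    ∀ (k : ℕ) {p}, p ∈ I ^ (k + β.degree) → pderivPow β p ∈ I ^ k := by
  induction β using Finsupp.induction_single_one with
  | zero => simp [pderivPow_zero]
  | add β γ hβ hγ =>
    intro k p hp
    rw [map_add, ← add_assoc] at hp
    rw [pderivPow_add, Module.End.mul_apply]
    exact hβ k (hγ _ hp)
  | single i =>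
    intro k p hp
    rw [Finsupp.degree_single] at hp
    simpa [pderivPow_single] using (pderiv i).map_mem_pow I k hp

def factorial (β : Fin n →₀ ℕ) : ℕ := ∏ i, (β i).factorial

theorem factorial_add_single_one (γ : Fin n →₀ ℕ) (i : Fin n) :
    factorial (γ + Finsupp.single i 1) = (γ i + 1) * factorial γ := by
  simp only [factorial]
  rw [← Finset.mul_prod_erase _ _ (Finset.mem_univ i),
    ← Finset.mul_prod_erase _ (fun j => (γ j).factorial) (Finset.mem_univ i),
    Finset.prod_congr rfl fun j hj => by
      rw [Finsupp.add_apply, Finsupp.single_eq_of_ne (Finset.ne_of_mem_erase hj), add_zero]]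
  simp [Nat.factorial_succ, mul_assoc]

/-- Taylor's formula, with factorials cleared so that it holds in any characteristic. -/
theorem factorial_mul_coeff_pderivPow (β γ : Fin n →₀ ℕ) (p : MvPolynomial (Fin n) K) :
    (factorial γ : K) * coeff γ (pderivPow β p) = factorial (γ + β) * coeff (γ + β) p := by
  induction β using Finsupp.induction_single_one generalizing γ p with
  | zero => simp [pderivPow_zero]
  | add β β' hβ hβ' => rw [pderivPow_add, Module.End.mul_apply, hβ, hβ', add_assoc]
  | single i =>
    rw [pderivPow_single, pow_one, Derivation.coeFn_coe, coeff_pderiv, factorial_add_single_one]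
    push_cast
    ring

noncomputable def translate (c : Fin n → K) :
    MvPolynomial (Fin n) K →ₐ[K] MvPolynomial (Fin n) K :=
  aeval fun i => X i + C (c i)

theorem pderiv_translate (c : Fin n → K) (i : Fin n) (p : MvPolynomial (Fin n) K) :
    pderiv i (translate c p) = translate c (pderiv i p) := by
  induction p using MvPolynomial.induction_on with
  | C a => simp [translate]
  | add p q hp hq => simp only [map_add, hp, hq]
  | mul_X p j hp =>
    have hX : translate c (X j) = X j + C (c j) := aeval_X _ _
    rcases eq_or_ne j i with rfl | hji
    · simp only [map_mul, pderiv_mul, hp, hX, map_add, pderiv_C, add_zero, pderiv_X_self, map_one]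
    · simp only [map_mul, pderiv_mul, hp, hX, map_add, pderiv_C, add_zero, pderiv_X_of_ne hji,
        map_zero]

theorem pderivPow_translate (c : Fin n → K) (β : Fin n →₀ ℕ) (p : MvPolynomial (Fin n) K) :
    pderivPow β (translate c p) = translate c (pderivPow β p) := by
  induction β using Finsupp.induction_single_one generalizing p with
  | zero => simp [pderivPow_zero]
  | add β γ hβ hγ => simp only [pderivPow_add, Module.End.mul_apply, hγ, hβ]
  | single i => simp [pderivPow_single, pderiv_translate]

theorem aeval_eq_constantCoeff_translate (c : Fin n → K) (p : MvPolynomial (Fin n) K) :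
    aeval c p = constantCoeff (translate c p) := by
  have h : (aeval (0 : Fin n → K)).comp (translate c) = aeval c :=
    algHom_ext fun i => by simp [translate]
  rw [← h, AlgHom.comp_apply, ← eval_zero]
  rfl

theorem translate_translate_neg (c : Fin n → K) (p : MvPolynomial (Fin n) K) :
    translate c (translate (-c) p) = p := by
  have h : (translate c).comp (translate (-c)) = AlgHom.id K _ :=
    algHom_ext fun i => by simp [translate]
  exact AlgHom.congr_fun h p

theorem aeval_pderivPow (ζ : Fin n → K) (β : Fin n →₀ ℕ) (p : MvPolynomial (Fin n) K) :
    aeval ζ (pderivPow β p) = factorial β * coeff β (translate ζ p) := by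
  simpa [factorial, aeval_eq_constantCoeff_translate, ← pderivPow_translate, constantCoeff_eq]
    using factorial_mul_coeff_pderivPow β 0 (translate ζ p)

theorem polyExpDual_apply (ω : MvPolynomial (Fin n) K) (ζ : Fin n → K)
    (p : MvPolynomial (Fin n) K) :
    polyExpDual ω ζ p = ∑ β ∈ ω.support, ω.coeff β * aeval ζ (pderivPow β p) := by
  simp [polyExpDual, diffOp, evalDual, map_sum]

theorem polyExpDual_eq_zero_of_mem_pow {ω : MvPolynomial (Fin n) K} {ζ : Fin n → K}
    {p : MvPolynomial (Fin n) K} (hp : p ∈ vanishingIdeal K {ζ} ^ (ω.totalDegree + 1)) :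
    polyExpDual ω ζ p = 0 := by
  rw [polyExpDual_apply]
  refine Finset.sum_eq_zero fun β hβ => ?_
  have hdeg : β.degree ≤ ω.totalDegree := le_totalDegree hβ
  have hmem : pderivPow β p ∈ vanishingIdeal K {ζ} := by
    refine Ideal.pow_le_self (n := ω.totalDegree - β.degree + 1) (by omega)
      (pderivPow_mem_pow _ β _ ?_)
    rwa [show ω.totalDegree - β.degree + 1 + β.degree = ω.totalDegree + 1 by omega]
  rw [(mem_vanishingIdeal_singleton_iff ζ _).1 hmem, mul_zero]

theorem polyExpDual_ne_zero [CharZero K] {ω : MvPolynomial (Fin n) K} (hω : ω ≠ 0)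
    (ζ : Fin n → K) : polyExpDual ω ζ ≠ 0 := by
  obtain ⟨β₀, hβ₀⟩ := support_nonempty.2 hω
  have hval : polyExpDual ω ζ (translate (-ζ) (monomial β₀ 1)) = ω.coeff β₀ * factorial β₀ := by
    simp [polyExpDual_apply, aeval_pderivPow, translate_translate_neg, coeff_monomial, hβ₀]
  intro h
  rw [h, LinearMap.zero_apply, eq_comm] at hval
  refine mul_ne_zero (mem_support_iff.1 hβ₀) ?_ hval
  exact Nat.cast_ne_zero.2 (Finset.prod_ne_zero_iff.2 fun i _ => Nat.factorial_ne_zero _)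

theorem pow_vanishingIdeal_le_hankelKer (ω : MvPolynomial (Fin n) K) (ζ : Fin n → K) :
    vanishingIdeal K {ζ} ^ (ω.totalDegree + 1) ≤ hankelKer (polyExpDual ω ζ) :=
  fun _ hp q => polyExpDual_eq_zero_of_mem_pow (Ideal.mul_mem_right q _ hp)

theorem hankelKer_ne_top {σ : Module.Dual K (MvPolynomial (Fin n) K)} (hσ : σ ≠ 0) :
    hankelKer σ ≠ ⊤ := fun h =>
  hσ <| LinearMap.ext fun q => by simpa using (Ideal.eq_top_iff_one _).1 h q

theorem hankelKer_polyExpDual_le [CharZero K] {ω : MvPolynomial (Fin n) K} (hω : ω ≠ 0)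
    (ζ : Fin n → K) : hankelKer (polyExpDual ω ζ) ≤ vanishingIdeal K {ζ} := by
  obtain ⟨M, hM, hle⟩ := Ideal.exists_le_maximal _ (hankelKer_ne_top (polyExpDual_ne_zero hω ζ))
  have := hM.isPrime
  have hζM : vanishingIdeal K {ζ} ≤ M :=
    Ideal.IsPrime.le_of_pow_le ((pow_vanishingIdeal_le_hankelKer ω ζ).trans hle)
  rwa [← Ideal.IsMaximal.eq_of_le inferInstance hM.ne_top hζM] at hle

theorem _root_.MvPolynomial.eq_of_vanishingIdeal_singleton_le {σ : Type*} {a b : σ → K}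
    (h : vanishingIdeal K {a} ≤ vanishingIdeal K ({b} : Set (σ → K))) : a = b := by
  funext k
  have hk := h ((mem_vanishingIdeal_singleton_iff a (X k - C (a k))).2 (by simp))
  simpa [sub_eq_zero, eq_comm] using (mem_vanishingIdeal_singleton_iff b _).1 hk

theorem finset_inf_hankelKer_le {ι : Type*} (s : Finset ι)
    (τ : ι → Module.Dual K (MvPolynomial (Fin n) K)) :
    s.inf (fun j => hankelKer (τ j)) ≤ hankelKer (∑ j ∈ s, τ j) := fun _ hp q => by
  rw [LinearMap.sum_apply]
  exact Finset.sum_eq_zero fun j hj => Submodule.mem_finsetInf.1 hp j hj q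

theorem hankelKer_add_inf_le (τ τ' : Module.Dual K (MvPolynomial (Fin n) K)) :
    hankelKer (τ + τ') ⊓ hankelKer τ' ≤ hankelKer τ := fun _ hp q => by
  simpa [hp.2 q] using hp.1 q

theorem exists_eq_of_hankelKer_sum_le {r : ℕ} (ξ : Fin r → Fin n → K)
    (ω : Fin r → MvPolynomial (Fin n) K) {x : Fin n → K}
    (h : hankelKer (∑ j, polyExpDual (ω j) (ξ j)) ≤ vanishingIdeal K {x}) : ∃ j, ξ j = x := by
  have hinf : Finset.univ.inf (fun j => vanishingIdeal K {ξ j} ^ ((ω j).totalDegree + 1)) ≤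
      vanishingIdeal K {x} :=
    calc _ ≤ Finset.univ.inf (fun j => hankelKer (polyExpDual (ω j) (ξ j))) :=
          Finset.inf_mono_fun fun j _ => pow_vanishingIdeal_le_hankelKer (ω j) (ξ j)
      _ ≤ _ := (finset_inf_hankelKer_le _ _).trans h
  obtain ⟨j, -, hj⟩ := (Ideal.IsPrime.inf_le' inferInstance).1 hinf
  exact ⟨j, eq_of_vanishingIdeal_singleton_le (Ideal.IsPrime.le_of_pow_le hj)⟩

theorem hankelKer_sum_le_vanishingIdeal [CharZero K] {r : ℕ} {ξ : Fin r → Fin n → K}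
    (hξ : Function.Injective ξ) {ω : Fin r → MvPolynomial (Fin n) K} (hω : ∀ j, ω j ≠ 0)
    (i : Fin r) :
    hankelKer (∑ j, polyExpDual (ω j) (ξ j)) ≤ vanishingIdeal K {ξ i} := by
  set τ := fun j => polyExpDual (ω j) (ξ j)
  have hle : hankelKer (∑ j, τ j) ⊓
      (Finset.univ.erase i).inf (fun j => vanishingIdeal K {ξ j} ^ ((ω j).totalDegree + 1)) ≤
      vanishingIdeal K {ξ i} :=
    calc _ ≤ hankelKer (τ i + ∑ j ∈ Finset.univ.erase i, τ j) ⊓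
          hankelKer (∑ j ∈ Finset.univ.erase i, τ j) := by
          rw [Finset.add_sum_erase _ _ (Finset.mem_univ i)]
          exact inf_le_inf_left _ <| (Finset.inf_mono_fun fun j _ =>
            pow_vanishingIdeal_le_hankelKer (ω j) (ξ j)).trans (finset_inf_hankelKer_le _ _)
      _ ≤ hankelKer (τ i) := hankelKer_add_inf_le _ _
      _ ≤ _ := hankelKer_polyExpDual_le (hω i) (ξ i)
  refine ((Ideal.IsPrime.inf_le inferInstance).1 hle).resolve_right fun h => ?_
  obtain ⟨j, hj, hji⟩ := (Ideal.IsPrime.inf_le' inferInstance).1 h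
  exact Finset.ne_of_mem_erase hj (hξ (eq_of_vanishingIdeal_singleton_le
    (Ideal.IsPrime.le_of_pow_le hji)))

end PolyExp

theorem statement7_general {K : Type*} [Field K] [CharZero K] {n : ℕ}
    (r' : ℕ) (ξ : Fin r' → Fin n → K) (hξ : Function.Injective ξ)
    (ω : Fin r' → MvPolynomial (Fin n) K) (hω : ∀ i, ω i ≠ 0)
    (σ : Module.Dual K (MvPolynomial (Fin n) K))
    (hσ : σ = ∑ i, PolyExp.polyExpDual (ω i) (ξ i)) :
    {x : Fin n → K | ∀ p ∈ PolyExp.hankelKer σ, MvPolynomial.aeval x p = 0} =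
      Set.range ξ := by
  subst hσ
  ext x
  change x ∈ zeroLocus K _ ↔ _
  rw [← Set.singleton_subset_iff, le_zeroLocus_iff_le_vanishingIdeal]
  constructor
  · exact PolyExp.exists_eq_of_hankelKer_sum_le ξ ω
  · rintro ⟨i, rfl⟩
    exact PolyExp.hankelKer_sum_le_vanishingIdeal hξ hω i

/-- If `σ = Σᵢ ωᵢ·e_{ξᵢ}` with nonzero polynomial weights and pairwise
distinct points, then the zero set of the ideal `I_σ = ker H_σ` is exactly `{ξ₁,…,ξ_{r'}}`. -/
theorem statement7 {K : Type*} [Field K] [CharZero K] [IsAlgClosed K] {n : ℕ}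
    (r' : ℕ) (ξ : Fin r' → Fin n → K) (hξ : Function.Injective ξ)
    (ω : Fin r' → MvPolynomial (Fin n) K) (hω : ∀ i, ω i ≠ 0)
    (σ : Module.Dual K (MvPolynomial (Fin n) K))
    (hσ : σ = ∑ i, PolyExp.polyExpDual (ω i) (ξ i)) :
    {x : Fin n → K | ∀ p ∈ PolyExp.hankelKer σ, MvPolynomial.aeval x p = 0} =
      Set.range ξ :=
  statement7_general r' ξ hξ ω hω σ hσ
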